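/- arXiv:2107.11916 — 2 statements merged into one kernel-verified Lean document; each statement's English description precedes it below -/
import Mathlib

section
/- Let A be a K-subalgebra of K[x] of finite codimension, let α ∈ K with α ∉ Sp(A), and let D be an α-derivation of A. Then there exists a constant c ∈ K such that D(f) = c·f'(α) for every f ∈ A. -/
open Polynomial

/-- The spectrum of a subalgebra `A` of `K[x]`. -/
def subalgebraSpectrum {K : Type*} [Field K] (A : Subalgebra K (Polynomial K)) : Set K :=
  {α | (∀ f ∈ A, (Polynomial.derivative f).eval α = 0) ∨
    ∃ β : K, β ≠ α ∧ ∀ f ∈ A, f.eval α = f.eval β}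

/-- `D` is an `α`-derivation of the subalgebra `A` of `K[x]`. -/
def IsAlphaDerivation {K : Type*} [Field K] (A : Subalgebra K (Polynomial K)) (α : K)
    (D : A →ₗ[K] K) : Prop :=
  ∀ f g : A, D (f * g) = D f * (g : Polynomial K).eval α + (f : Polynomial K).eval α * D g

/-!
Let `𝔪 ⊆ A` be the ideal of polynomials vanishing at `α`. Since `α ∉ Sp(A)`, the polynomials
`f /ₘ (X - α)` with `f ∈ A` have no common zero, so over the algebraically closed field `K` they
generate `K[X]`; hence `𝔪` generates the ideal `(X - α)` of `K[X]`, and `K[X]/A = 𝔪 • (K[X]/A)`.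
As `K[X]/A` is finite-dimensional, Nakayama's lemma gives `r ∈ A` with `r(α) = 1` and
`r K[X] ⊆ A`. Writing `f - f(α) = (X - α) q`, so that `q(α) = f'(α)`, the identity
`(f - f(α)) r² = (r (X - α)) (r q)` between elements of `A` and the Leibniz rule give
`D f = D (r (X - α)) f'(α)`.
-/

namespace Polynomial

variable {R : Type*} [CommRing R]

theorem eval_divByMonic_X_sub_C_self (f : R[X]) (a : R) :
    (f /ₘ (X - C a)).eval a = (derivative f).eval a := by
  simpa using
    congrArg (eval a) (divByMonic_add_X_sub_C_mul_derivative_divByMonic_eq_derivative f a)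

theorem sub_mul_eval_divByMonic_X_sub_C (f : R[X]) (a b : R) :
    (b - a) * (f /ₘ (X - C a)).eval b = f.eval b - f.eval a := by
  simpa [modByMonic_X_sub_C_eq_C_eval] using
    congrArg (eval b) (X_sub_C_mul_divByMonic_eq_sub_modByMonic f a)

theorem ideal_eq_top_of_forall_exists_eval_ne_zero {K : Type*} [Field K] [IsAlgClosed K]
    (J : Ideal K[X]) (h : ∀ γ : K, ∃ p ∈ J, p.eval γ ≠ 0) : J = ⊤ := by
  rw [← Ideal.span_singleton_generator J, Ideal.span_singleton_eq_top]
  by_contra hd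
  obtain ⟨γ, hγ⟩ := IsAlgClosed.exists_root _ (mt isUnit_iff_degree_eq_zero.2 hd)
  obtain ⟨p, hp, hpγ⟩ := h γ
  exact hpγ (eval_eq_zero_of_dvd_of_eval_eq_zero
    ((Submodule.IsPrincipal.mem_iff_generator_dvd J).1 hp) hγ)

end Polynomial

section

variable {K : Type*} [Field K] {A : Subalgebra K K[X]} {α : K}

variable (A α) in
noncomputable def vanishingIdeal : Ideal A :=
  RingHom.ker ((evalRingHom α).comp (algebraMap A K[X]))

theorem mem_vanishingIdeal {f : A} : f ∈ vanishingIdeal A α ↔ (f : K[X]).eval α = 0 :=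
  Iff.rfl

theorem X_sub_C_mul_divByMonic_mem_map_vanishingIdeal {f : K[X]} (hf : f ∈ A) :
    (X - C α) * (f /ₘ (X - C α)) ∈ (vanishingIdeal A α).map (algebraMap A K[X]) := by
  have hc : f - C (f.eval α) ∈ A := A.sub_mem hf (A.algebraMap_mem _)
  rw [X_sub_C_mul_divByMonic_eq_sub_modByMonic, modByMonic_X_sub_C_eq_C_eval]
  exact Ideal.mem_map_of_mem (algebraMap A K[X]) (x := ⟨_, hc⟩)
    ((mem_vanishingIdeal (α := α)).2 (by simp))

theorem X_sub_C_mem_map_vanishingIdeal [IsAlgClosed K] (hα : α ∉ subalgebraSpectrum A) :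
    X - C α ∈ (vanishingIdeal A α).map (algebraMap A K[X]) := by
  set I := (vanishingIdeal A α).map (algebraMap A K[X])
  have hquot : ∀ f ∈ A, f /ₘ (X - C α) ∈ I.colon {X - C α} := fun f hf => by
    rw [Submodule.mem_colon_singleton, smul_eq_mul, mul_comm]
    exact X_sub_C_mul_divByMonic_mem_map_vanishingIdeal hf
  simp only [subalgebraSpectrum, Set.mem_ofPred_eq, not_or, not_forall, not_exists, not_and] at hα
  obtain ⟨⟨g, hg, hg'⟩, hsep⟩ := hα
  have htop : I.colon {X - C α} = ⊤ := by
    refine ideal_eq_top_of_forall_exists_eval_ne_zero _ fun γ => ?_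
    rcases eq_or_ne γ α with rfl | hγ
    · exact ⟨_, hquot g hg, by rwa [eval_divByMonic_X_sub_C_self]⟩
    · obtain ⟨f, hf, hfγ⟩ := hsep γ hγ
      refine ⟨_, hquot f hf, fun h => hfγ ?_⟩
      have := sub_mul_eval_divByMonic_X_sub_C f α γ
      rwa [h, mul_zero, eq_comm, sub_eq_zero, eq_comm] at this
  simpa using Submodule.mem_colon_singleton.1 (htop ▸ Submodule.mem_top : (1 : K[X]) ∈ _)

theorem exists_eval_eq_one_forall_mul_mem
    (hfin : FiniteDimensional K (K[X] ⧸ Subalgebra.toSubmodule A))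
    (hX : X - C α ∈ (vanishingIdeal A α).map (algebraMap A K[X])) :
    ∃ r : K[X], r.eval α = 1 ∧ ∀ p, r * p ∈ A := by
  let N : Submodule A K[X] := 1
  have hN : N.restrictScalars K = Subalgebra.toSubmodule A := by
    ext f
    simp [N]
  rw [← hN] at hfin
  have : Module.Finite A (K[X] ⧸ N) :=
    have := Module.Finite.equiv (Submodule.Quotient.restrictScalarsEquiv K N)
    Module.Finite.of_restrictScalars_finite K A _
  have hle : (⊤ : Submodule A (K[X] ⧸ N)) ≤ vanishingIdeal A α • ⊤ := by
    rintro x -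
    obtain ⟨f, rfl⟩ := N.mkQ_surjective x
    have hf : f - C (f.eval α) ∈ vanishingIdeal A α • (⊤ : Submodule A K[X]) := by
      rw [Ideal.smul_top_eq_map, Submodule.restrictScalars_mem, ← modByMonic_X_sub_C_eq_C_eval,
        ← X_sub_C_mul_divByMonic_eq_sub_modByMonic]
      exact Ideal.mul_mem_right _ _ hX
    have hC : N.mkQ (C (f.eval α)) = 0 :=
      (Submodule.Quotient.mk_eq_zero N).2 (Submodule.mem_one.2 ⟨⟨_, A.algebraMap_mem _⟩, rfl⟩)
    have := Submodule.mem_map_of_mem (f := N.mkQ) hf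
    rw [Submodule.map_smul'', map_sub, hC, sub_zero] at this
    exact Submodule.smul_mono le_rfl le_top this
  obtain ⟨r, hr1, hr⟩ := Submodule.exists_sub_one_mem_and_smul_eq_zero_of_fg_of_le_smul _ ⊤
    (Module.Finite.fg_top) hle
  refine ⟨r, by simpa [mem_vanishingIdeal, sub_eq_zero] using hr1, fun p => ?_⟩
  have := hr (N.mkQ p) trivial
  rw [← map_smul, Submodule.mkQ_apply, Submodule.Quotient.mk_eq_zero, Submodule.mem_one] at this
  obtain ⟨y, hy⟩ := this
  rw [Subalgebra.smul_def, smul_eq_mul] at hy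
  exact hy ▸ y.2

namespace IsAlphaDerivation

variable {D : A →ₗ[K] K} (hD : IsAlphaDerivation A α D)
include hD

theorem map_one : D 1 = 0 := by
  simpa using hD 1 1

theorem map_algebraMap (c : K) : D (algebraMap K A c) = 0 := by
  rw [Algebra.algebraMap_eq_smul_one, map_smul, hD.map_one, smul_zero]

theorem eq_mul_eval_derivative {r : K[X]} (hrα : r.eval α = 1) (hr : ∀ p, r * p ∈ A) (f : A) :
    D f = D ⟨r * (X - C α), hr _⟩ * (derivative (f : K[X])).eval α := by
  set q := (f : K[X]) /ₘ (X - C α)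
  let ρ : A := ⟨r, mul_one r ▸ hr 1⟩
  have key : (f - algebraMap K A ((f : K[X]).eval α)) * ρ * ρ =
      ⟨r * (X - C α), hr _⟩ * ⟨r * q, hr q⟩ := by
    apply Subtype.ext
    have := X_sub_C_mul_divByMonic_eq_sub_modByMonic (f : K[X]) α
    rw [modByMonic_X_sub_C_eq_C_eval] at this
    simp only [Subalgebra.coe_mul, Subalgebra.coe_sub, Subalgebra.coe_algebraMap, algebraMap_eq, ρ]
    linear_combination (-(r * r)) * this
  have := congrArg D key
  rw [hD, hD, map_sub, hD.map_algebraMap, hD] at this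
  simpa [ρ, hrα, q, eval_divByMonic_X_sub_C_self] using this

end IsAlphaDerivation

end

theorem trivial_derivation_of_not_mem_spectrum_general
    {K : Type*} [Field K] [IsAlgClosed K]
    (A : Subalgebra K (Polynomial K))
    (hfin : FiniteDimensional K (Polynomial K ⧸ Subalgebra.toSubmodule A))
    (α : K) (hα : α ∉ subalgebraSpectrum A)
    (D : A →ₗ[K] K) (hD : IsAlphaDerivation A α D) :
    ∃ c : K, ∀ f : A, D f = c * (Polynomial.derivative (f : Polynomial K)).eval α := by
  obtain ⟨r, hrα, hr⟩ :=
    exists_eval_eq_one_forall_mul_mem hfin (X_sub_C_mem_map_vanishingIdeal hα)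
  exact ⟨_, hD.eq_mul_eval_derivative hrα hr⟩

theorem trivial_derivation_of_not_mem_spectrum
    {K : Type*} [Field K] [IsAlgClosed K] [CharZero K]
    (A : Subalgebra K (Polynomial K))
    (hfin : FiniteDimensional K (Polynomial K ⧸ Subalgebra.toSubmodule A))
    (α : K) (hα : α ∉ subalgebraSpectrum A)
    (D : A →ₗ[K] K) (hD : IsAlphaDerivation A α D) :
    ∃ c : K, ∀ f : A, D f = c * (Polynomial.derivative (f : Polynomial K)).eval α :=
  trivial_derivation_of_not_mem_spectrum_general A hfin α hα D hD
end

section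
/- Let B be a K-subalgebra of K[x] of finite codimension, let α ∈ K with α ∉ Sp(B), and let A = {f ∈ B : f'(α) = 0} (the kernel in B of the trivial α-derivation f ↦ f'(α)). Then every α-derivation D of the subalgebra A has the form D(f) = a·f'''(α) + b·f''(α) for some constants a, b ∈ K, where f'' and f''' denote the second and third derivatives. -/
/-!
Finite codimension makes the conductor `{g | g • K[X] ⊆ B}` a nonzero ideal: multiplication by a
nonconstant `p ∈ B` acts on the finite-dimensional space `K[X] ⧸ B`, so some nonzero polynomial in
`p` lies in the conductor. Since `α ∉ Sp(B)`, `B` contains an element vanishing to order exactly one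
at `α`, and, for any `h` with `h(α) ≠ 0`, an element divisible by `h` taking the value `1` at `α`.
Combining them (Chinese remainder theorem for `(X - α)^(e+1)` and `h`) lowers the order at `α` of
conductor elements, so the conductor contains some `e ≡ 1 mod (X - α)²`.

Then `A` contains `e²` and `(X - α)² e K[X]`. If `f ∈ A` is divisible by `(X - α)⁴`, then `f e²`
is a product of two elements of `A` vanishing at `α`, so `D f = D (f e²) = 0`. Modulo such `f`, the
Taylor expansion of order three writes every element of `A` as a combination of `1`,
`(X - α)² e` and `(X - α)³ e`, whose second and third derivatives at `α` are `(2, 0)` and `(0, 6)`.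
-/

open Polynomial

theorem Polynomial.X_sub_C_pow_dvd_iff_iterate_derivative_eval_eq_zero {R : Type*} [CommRing R]
    [IsDomain R] [CharZero R] {p : R[X]} {α : R} {n : ℕ} :
    (X - C α) ^ n ∣ p ↔ ∀ k < n, (derivative^[k] p).eval α = 0 := by
  rcases eq_or_ne p 0 with rfl | hp
  · simp
  rcases n with _ | n
  · simp
  rw [← le_rootMultiplicity_iff hp, Nat.succ_le_iff,
    lt_rootMultiplicity_iff_isRoot_iterate_derivative hp]
  simp [IsRoot]

open Finset Nat in
theorem Polynomial.X_sub_C_pow_dvd_sub_taylor {K : Type*} [Field K] [CharZero K]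
    (f : K[X]) (α : K) (n : ℕ) :
    (X - C α) ^ n ∣ f - ∑ k ∈ range n, C ((derivative^[k] f).eval α / k !) * (X - C α) ^ k := by
  rw [X_sub_C_pow_dvd_iff_iterate_derivative_eval_eq_zero]
  intro j hj
  simp only [iterate_derivative_sub, iterate_derivative_sum, iterate_derivative_C_mul,
    iterate_derivative_X_sub_pow, eval_sub, eval_finsetSum, eval_mul, eval_C,
    eval_pow, eval_X, sub_self, nsmul_eq_mul]
  rw [sum_eq_single j]
  · simp [descFactorial_self, (factorial_pos j).ne']
  · intro k _ hkj
    rcases lt_or_gt_of_ne hkj with hk | hk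
    · simp [descFactorial_eq_zero_iff_lt.2 hk]
    · simp [zero_pow (Nat.sub_ne_zero_of_lt hk)]
  · simp [hj]

theorem LinearMap.exists_ne_zero_apply_eq_zero_of_not_finiteDimensional {K V W : Type*} [Field K]
    [AddCommGroup V] [Module K V] [AddCommGroup W] [Module K W] [FiniteDimensional K W]
    (hV : ¬ FiniteDimensional K V) (f : V →ₗ[K] W) : ∃ v ≠ 0, f v = 0 := by
  by_contra! h
  refine hV (.of_injective f ((injective_iff_map_eq_zero f).2 fun v hv ↦ ?_))
  exact by_contra fun hne ↦ h v hne hv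

theorem Polynomial.isCoprime_X_sub_C_of_eval_ne_zero {K : Type*} [Field K] {p : K[X]} {α : K}
    (hp : p.eval α ≠ 0) : IsCoprime (X - C α) p :=
  (irreducible_X_sub_C α).coprime_iff_not_dvd.2 (by rwa [dvd_iff_isRoot])

theorem Ideal.exists_mem_X_sub_C_pow_dvd_sub_one {K : Type*} [Field K] {I : Ideal K[X]} {q : K[X]}
    {α : K} (hq : q ∈ I) (hqα : q.eval α ≠ 0) (n : ℕ) : ∃ e ∈ I, (X - C α) ^ n ∣ e - 1 := by
  obtain ⟨a, b, hab⟩ := (isCoprime_X_sub_C_of_eval_ne_zero hqα).pow_left (m := n)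
  exact ⟨b * q, I.mul_mem_left b hq, -a, by linear_combination hab⟩

namespace Subalgebra

variable {K : Type*} [Field K] (B : Subalgebra K K[X])

def conductor : Ideal K[X] where
  carrier := {g | ∀ u, g * u ∈ B}
  add_mem' hg hh u := by rw [add_mul]; exact B.add_mem (hg u) (hh u)
  zero_mem' u := by rw [zero_mul]; exact B.zero_mem
  smul_mem' c g hg u := by rw [smul_eq_mul, mul_assoc, mul_left_comm]; exact hg (c * u)

variable {B}

theorem mem_conductor {g : K[X]} : g ∈ B.conductor ↔ ∀ u, g * u ∈ B := Iff.rfl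

theorem mem_of_mem_conductor {g : K[X]} (hg : g ∈ B.conductor) : g ∈ B := by
  simpa using mem_conductor.1 hg 1

theorem C_mem (c : K) : C c ∈ B := B.algebraMap_mem c

theorem exists_mem_natDegree_pos (hfin : FiniteDimensional K (K[X] ⧸ toSubmodule B)) :
    ∃ p ∈ B, 0 < p.natDegree := by
  obtain ⟨a, ha, hXa⟩ := LinearMap.exists_ne_zero_apply_eq_zero_of_not_finiteDimensional
    not_finite ((toSubmodule B).mkQ ∘ₗ LinearMap.mulLeft K X)
  refine ⟨X * a, ?_, by simp [natDegree_X_mul ha]⟩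
  simpa [Submodule.Quotient.mk_eq_zero] using hXa

theorem conductor_ne_bot (hfin : FiniteDimensional K (K[X] ⧸ toSubmodule B)) :
    B.conductor ≠ ⊥ := by
  obtain ⟨p, hpB, hp⟩ := exists_mem_natDegree_pos hfin
  set M := toSubmodule B
  have hcompat (a : K[X]) : LinearMap.mul K K[X] (aeval p a) ∈ M.compatibleMaps M :=
    fun b hb ↦ B.mul_mem (aeval_mem_adjoin_singleton K p |> Algebra.adjoin_le
      (Set.singleton_subset_iff.2 hpB)) hb
  obtain ⟨a, ha, hΦ⟩ := LinearMap.exists_ne_zero_apply_eq_zero_of_not_finiteDimensional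
    not_finite (M.mapQLinear M ∘ₗ
      LinearMap.codRestrict _ (LinearMap.mul K K[X] ∘ₗ (aeval p).toLinearMap) hcompat)
  refine (Submodule.ne_bot_iff _).2 ⟨aeval p a, fun u ↦ ?_, ?_⟩
  · have := LinearMap.congr_fun hΦ (M.mkQ u)
    change M.mkQ (aeval p a * u) = 0 at this
    exact (Submodule.Quotient.mk_eq_zero _).1 this
  · rw [← comp_eq_aeval, Ne, comp_eq_zero_iff, not_or, not_and_or]
    exact ⟨ha, .inr fun h ↦ hp.ne' (by rw [h, natDegree_C])⟩

theorem exists_mem_eval_eq_one_eval_eq_zero {α : K} (hsep : ∀ β ≠ α, ∃ f ∈ B, f.eval α ≠ f.eval β)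
    {β : K} (hβ : β ≠ α) :
    ∃ s ∈ B, s.eval α = 1 ∧ s.eval β = 0 := by
  obtain ⟨f, hf, hne⟩ := hsep β hβ
  refine ⟨C (f.eval α - f.eval β)⁻¹ * (f - C (f.eval β)),
    B.mul_mem (C_mem _) (B.sub_mem hf (C_mem _)), ?_, by simp⟩
  simp [inv_mul_cancel₀ (sub_ne_zero.2 hne)]

theorem exists_mem_eval_eq_one_prod_X_sub_C_dvd {α : K}
    (hsep : ∀ β ≠ α, ∃ f ∈ B, f.eval α ≠ f.eval β) (m : Multiset K) (hm : α ∉ m) :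
    ∃ P ∈ B, P.eval α = 1 ∧ (m.map fun β ↦ X - C β).prod ∣ P := by
  induction m using Multiset.induction_on with
  | empty => exact ⟨1, B.one_mem, eval_one, by simp⟩
  | cons β m ih =>
    obtain ⟨P, hPB, hP, hmP⟩ := ih fun h ↦ hm (Multiset.mem_cons_of_mem h)
    obtain ⟨s, hsB, hsα, hsβ⟩ :=
      exists_mem_eval_eq_one_eval_eq_zero hsep fun h ↦ hm (h ▸ Multiset.mem_cons_self β m)
    refine ⟨s * P, B.mul_mem hsB hPB, by simp [hsα, hP], ?_⟩
    rw [Multiset.map_cons, Multiset.prod_cons]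
    exact mul_dvd_mul (dvd_iff_isRoot.2 hsβ) hmP

theorem exists_mem_eval_eq_one_dvd [IsAlgClosed K] {α : K}
    (hsep : ∀ β ≠ α, ∃ f ∈ B, f.eval α ≠ f.eval β) {h : K[X]} (hh : h.eval α ≠ 0) :
    ∃ P ∈ B, P.eval α = 1 ∧ h ∣ P := by
  have h0 : h ≠ 0 := by rintro rfl; simp at hh
  obtain ⟨P, hPB, hP, hdvd⟩ :=
    exists_mem_eval_eq_one_prod_X_sub_C_dvd hsep h.roots fun hα ↦ hh (isRoot_of_mem_roots hα)
  refine ⟨P, hPB, hP, dvd_trans ?_ hdvd⟩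
  conv_lhs =>
    rw [← C_leadingCoeff_mul_prod_multiset_X_sub_C (p := h) IsAlgClosed.card_roots_eq_natDegree]
  exact (C_mul_dvd (leadingCoeff_ne_zero.2 h0)).2 dvd_rfl

theorem exists_X_sub_C_mul_mem {α : K} (hder : ∃ f ∈ B, (derivative f).eval α ≠ 0) :
    ∃ v : K[X], v.eval α ≠ 0 ∧ (X - C α) * v ∈ B := by
  obtain ⟨f, hfB, hf⟩ := hder
  obtain ⟨v, hv⟩ := X_sub_C_dvd_sub_C_eval (p := f) (a := α)
  refine ⟨v, ?_, hv ▸ B.sub_mem hfB (C_mem _)⟩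
  have hfv := congrArg (fun g ↦ (derivative g).eval α) hv
  simp only [derivative_sub, derivative_C, sub_zero, derivative_mul, derivative_X, one_mul,
    eval_add, eval_mul, eval_sub, eval_X, eval_C, sub_self, zero_mul, add_zero] at hfv
  rwa [← hfv]

theorem pow_mul_mem_conductor_of_pow_succ_mul_mem [IsAlgClosed K] {α : K}
    (hder : ∃ f ∈ B, (derivative f).eval α ≠ 0) (hsep : ∀ β ≠ α, ∃ f ∈ B, f.eval α ≠ f.eval β)
    {h : K[X]} (hh : h.eval α ≠ 0) {e : ℕ} (hmem : (X - C α) ^ (e + 1) * h ∈ B.conductor) :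
    (X - C α) ^ e * h ∈ B.conductor := by
  suffices hB : (X - C α) ^ e * h ∈ B by
    intro u
    obtain ⟨w, hw⟩ := X_sub_C_dvd_sub_C_eval (p := u) (a := α)
    have : (X - C α) ^ e * h * u =
        C (u.eval α) * ((X - C α) ^ e * h) + (X - C α) ^ (e + 1) * h * w := by
      linear_combination (X - C α) ^ e * h * hw
    rw [this]
    exact B.add_mem (B.mul_mem (C_mem _) hB) (mem_conductor.1 hmem w)
  obtain ⟨v, hv, hvB⟩ := exists_X_sub_C_mul_mem hder
  obtain ⟨P, hPB, hP, hhP⟩ := exists_mem_eval_eq_one_dvd hsep hh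
  set c := h.eval α / v.eval α ^ e
  have hdvd : (X - C α) ^ (e + 1) * h ∣ (X - C α) ^ e * h - C c * ((X - C α) * v) ^ e * P := by
    refine ((isCoprime_X_sub_C_of_eval_ne_zero hh).pow_left).mul_dvd ?_ ?_
    · have : (X - C α) ∣ h - C c * v ^ e * P := by
        rw [dvd_iff_isRoot, IsRoot, eval_sub]
        simp [c, hP, div_mul_cancel₀ _ (pow_ne_zero e hv)]
      rw [pow_succ, mul_pow]
      convert mul_dvd_mul_left ((X - C α) ^ e) this using 1
      ring
    · exact dvd_sub (dvd_mul_left h _) (dvd_mul_of_dvd_right hhP _)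
  obtain ⟨w, hw⟩ := hdvd
  rw [← sub_add_cancel ((X - C α) ^ e * h) (C c * ((X - C α) * v) ^ e * P), hw]
  exact B.add_mem (mem_conductor.1 hmem w) (B.mul_mem (B.mul_mem (C_mem c) (B.pow_mem hvB e)) hPB)

theorem mem_conductor_of_pow_mul_mem [IsAlgClosed K] {α : K}
    (hder : ∃ f ∈ B, (derivative f).eval α ≠ 0) (hsep : ∀ β ≠ α, ∃ f ∈ B, f.eval α ≠ f.eval β)
    {h : K[X]} (hh : h.eval α ≠ 0) : ∀ e : ℕ, (X - C α) ^ e * h ∈ B.conductor → h ∈ B.conductor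
  | 0, hmem => by simpa using hmem
  | e + 1, hmem => mem_conductor_of_pow_mul_mem hder hsep hh e
      (pow_mul_mem_conductor_of_pow_succ_mul_mem hder hsep hh hmem)

theorem exists_mem_conductor_eval_ne_zero [IsAlgClosed K]
    (hfin : FiniteDimensional K (K[X] ⧸ toSubmodule B)) {α : K} (hα : α ∉ subalgebraSpectrum B) :
    ∃ q ∈ B.conductor, q.eval α ≠ 0 := by
  change ¬(_ ∨ _) at hα
  push Not at hα
  obtain ⟨hder, hsep⟩ := hα
  obtain ⟨g, hg, hg0⟩ := (Submodule.ne_bot_iff _).1 (conductor_ne_bot hfin)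
  obtain ⟨h, hgh, hh⟩ := exists_eq_pow_rootMultiplicity_mul_and_not_dvd g hg0 α
  rw [dvd_iff_isRoot, IsRoot] at hh
  rw [hgh] at hg
  exact ⟨h, mem_conductor_of_pow_mul_mem hder hsep hh _ hg, hh⟩

end Subalgebra

theorem Polynomial.eval_derivative_eq_zero_of_X_sub_C_sq_dvd_sub_C {K : Type*} [Field K]
    [CharZero K] {f : K[X]} {α c : K} (h : (X - C α) ^ 2 ∣ f - C c) :
    (derivative f).eval α = 0 := by
  simpa using X_sub_C_pow_dvd_iff_iterate_derivative_eval_eq_zero.1 h 1 one_lt_two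

namespace IsAlphaDerivation

variable {K : Type*} [Field K] {A : Subalgebra K K[X]} {α : K} {D : A →ₗ[K] K}

theorem map_one_s19 (hD : IsAlphaDerivation A α D) : D 1 = 0 := by
  simpa using hD 1 1

theorem map_mul_eq_zero (hD : IsAlphaDerivation A α D) {f g : A} (hf : (f : K[X]).eval α = 0)
    (hg : (g : K[X]).eval α = 0) : D (f * g) = 0 := by
  simp [hD f g, hf, hg]

theorem map_eq_zero_of_X_sub_C_pow_four_dvd (hD : IsAlphaDerivation A α D) {e : K[X]}
    (hmul : ∀ u, (X - C α) ^ 2 * e * u ∈ A) (hee : e * e ∈ A) (he : e.eval α = 1) {f : A}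
    (hf : (X - C α) ^ 4 ∣ (f : K[X])) : D f = 0 := by
  obtain ⟨u, hu⟩ := hf
  let s : A := ⟨e * e, hee⟩
  have hDf : D (f * s) = D f := by simp [hD f s, s, he, hu]
  have hfs : f * s = ⟨_, hmul 1⟩ * ⟨_, hmul u⟩ := Subtype.ext (by simp [s, hu]; ring)
  rw [← hDf, hfs, hD.map_mul_eq_zero (by simp) (by simp)]

theorem exists_eq_iterate_derivative [CharZero K] (hD : IsAlphaDerivation A α D)
    (hA : ∀ f ∈ A, (derivative f).eval α = 0)
    (hker : ∀ f : A, (X - C α) ^ 4 ∣ (f : K[X]) → D f = 0) {F₀ F₁ : A}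
    (h₀ : (X - C α) ^ 4 ∣ (F₀ : K[X]) - (X - C α) ^ 2)
    (h₁ : (X - C α) ^ 4 ∣ (F₁ : K[X]) - (X - C α) ^ 3) :
    ∃ a b : K, ∀ f : A, D f = a * (derivative^[3] (f : K[X])).eval α +
      b * (derivative^[2] (f : K[X])).eval α := by
  refine ⟨D F₁ / 6, D F₀ / 2, fun f ↦ ?_⟩
  set c₂ := (derivative^[2] (f : K[X])).eval α
  set c₃ := (derivative^[3] (f : K[X])).eval α
  set g : A := f - (f : K[X]).eval α • 1 - (c₂ / 2) • F₀ - (c₃ / 6) • F₁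
  have hg : (X - C α) ^ 4 ∣ (g : K[X]) := by
    have hgT : (g : K[X]) = ((f : K[X]) - ∑ k ∈ Finset.range 4,
        C ((derivative^[k] (f : K[X])).eval α / k.factorial) * (X - C α) ^ k) -
        C (c₂ / 2) * ((F₀ : K[X]) - (X - C α) ^ 2) -
        C (c₃ / 6) * ((F₁ : K[X]) - (X - C α) ^ 3) := by
      simp [g, Finset.sum_range_succ, hA f f.2, Polynomial.smul_eq_C_mul, c₂, c₃, Nat.factorial]
      ring
    rw [hgT]
    exact dvd_sub (dvd_sub (X_sub_C_pow_dvd_sub_taylor _ α 4) (dvd_mul_of_dvd_right h₀ _))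
      (dvd_mul_of_dvd_right h₁ _)
  have hDg := hker g hg
  simp only [g, map_sub, map_smul, hD.map_one_s19, smul_eq_mul, mul_zero] at hDg
  linear_combination hDg

end IsAlphaDerivation

theorem derivations_of_kernel_of_trivial_derivation
    {K : Type*} [Field K] [IsAlgClosed K] [CharZero K]
    (B : Subalgebra K (Polynomial K))
    (hfin : FiniteDimensional K (Polynomial K ⧸ Subalgebra.toSubmodule B))
    (α : K) (hα : α ∉ subalgebraSpectrum B)
    (A : Subalgebra K (Polynomial K))
    (hA : ∀ f : Polynomial K, f ∈ A ↔ f ∈ B ∧ (Polynomial.derivative f).eval α = 0)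
    (D : A →ₗ[K] K) (hD : IsAlphaDerivation A α D) :
    ∃ a b : K, ∀ f : A,
      D f = a * ((Polynomial.derivative)^[3] (f : Polynomial K)).eval α +
            b * ((Polynomial.derivative)^[2] (f : Polynomial K)).eval α := by
  obtain ⟨q, hq, hqα⟩ := B.exists_mem_conductor_eval_ne_zero hfin hα
  obtain ⟨e, he, w, hw⟩ := Ideal.exists_mem_X_sub_C_pow_dvd_sub_one hq hqα 2
  have hmemA {f : K[X]} (c : K) (hf : f ∈ B) (hfc : (X - C α) ^ 2 ∣ f - C c) : f ∈ A :=
    (hA f).2 ⟨hf, eval_derivative_eq_zero_of_X_sub_C_sq_dvd_sub_C hfc⟩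
  have hmul (u : K[X]) : (X - C α) ^ 2 * e * u ∈ A :=
    hmemA 0 (by rw [mul_comm _ e, mul_assoc]; exact Subalgebra.mem_conductor.1 he _)
      (by simp [mul_assoc])
  have hee : e * e ∈ A :=
    have heB := Subalgebra.mem_of_mem_conductor he
    hmemA 1 (B.mul_mem heB heB) ⟨(e + 1) * w, by rw [C_1]; linear_combination (e + 1) * hw⟩
  have heα : e.eval α = 1 := by simpa [sub_eq_zero] using congrArg (eval α) hw
  exact hD.exists_eq_iterate_derivative (fun f hf ↦ ((hA f).1 hf).2)
    (fun f ↦ hD.map_eq_zero_of_X_sub_C_pow_four_dvd hmul hee heα) (F₀ := ⟨_, hmul 1⟩)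
    (F₁ := ⟨_, hmul (X - C α)⟩) ⟨w, by linear_combination (X - C α) ^ 2 * hw⟩
    ⟨(X - C α) * w, by linear_combination (X - C α) ^ 3 * hw⟩
end
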